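/- arXiv:2507.21345 — 3 statements merged into one kernel-verified Lean document; each statement's English description precedes it below -/
import Mathlib

section
/- Let D be an n×n real symmetric matrix with zero diagonal and positive off-diagonal entries, Tr the diagonal matrix of row sums of D, and let A be any n×n Hermitian matrix with |A_ij| = D_ij for all i,j (so A has zero diagonal). Set L = Tr − A. Then ρ(L) ≤ ρ(Tr + D). -/
open Matrix

noncomputable def specRad {n : ℕ} (M : Matrix (Fin n) (Fin n) ℂ) : ℝ :=
  sSup ((fun μ => ‖μ‖) '' spectrum ℂ M)

/-!
Entrywise `‖(Tr - A) i j‖ ≤ (Tr + D) i j` by the triangle inequality. A matrix dominated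
entrywise by a nonnegative one has no larger ℓ² operator norm (compare `‖M x‖` with `N |x|`),
so `ρ(L) ≤ ‖L‖ ≤ ‖Tr + D‖ = ρ(Tr + D)`, the last equality because `Tr + D` is symmetric.
-/

open scoped Matrix.Norms.L2Operator

theorem EuclideanSpace.norm_le_norm_of_norm_apply_le {𝕜 ι : Type*} [RCLike 𝕜] [Fintype ι]
    {x y : EuclideanSpace 𝕜 ι} (h : ∀ i, ‖x i‖ ≤ ‖y i‖) : ‖x‖ ≤ ‖y‖ := by
  rw [EuclideanSpace.norm_eq, EuclideanSpace.norm_eq]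
  gcongr with i
  exact h i

theorem specRad_nonneg {n : ℕ} (M : Matrix (Fin n) (Fin n) ℂ) : 0 ≤ specRad M :=
  Real.sSup_nonneg (by rintro _ ⟨μ, _, rfl⟩; exact norm_nonneg μ)

theorem spectralRadius_le_ofReal_specRad {n : ℕ} (M : Matrix (Fin n) (Fin n) ℂ) :
    spectralRadius ℂ M ≤ ENNReal.ofReal (specRad M) := by
  have hbdd : BddAbove ((fun μ => ‖μ‖) '' spectrum ℂ M) :=
    ((spectrum.isCompact M).image continuous_norm).bddAbove
  refine iSup₂_le fun μ hμ => ?_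
  rw [← enorm_eq_nnnorm, ← ofReal_norm]
  exact ENNReal.ofReal_le_ofReal (le_csSup hbdd ⟨μ, hμ, rfl⟩)

theorem specRad_eq_toReal_spectralRadius {n : ℕ} (M : Matrix (Fin n) (Fin n) ℂ) :
    specRad M = (spectralRadius ℂ M).toReal := by
  have hle := spectralRadius_le_ofReal_specRad M
  refine le_antisymm (Real.sSup_le ?_ ENNReal.toReal_nonneg)
    (ENNReal.toReal_le_of_le_ofReal (specRad_nonneg M) hle)
  rintro _ ⟨μ, hμ, rfl⟩
  simpa using ENNReal.toReal_mono (ne_top_of_le_ne_top ENNReal.ofReal_ne_top hle)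
    (le_iSup₂ (f := fun μ (_ : μ ∈ spectrum ℂ M) => (‖μ‖₊ : ENNReal)) μ hμ)

theorem specRad_le_l2_opNorm {n : ℕ} [NeZero n] (M : Matrix (Fin n) (Fin n) ℂ) :
    specRad M ≤ ‖M‖ :=
  Real.sSup_le (by rintro _ ⟨μ, hμ, rfl⟩; exact spectrum.norm_le_norm_of_mem hμ)
    (norm_nonneg M)

theorem Matrix.IsHermitian.specRad_eq_l2_opNorm {n : ℕ} {M : Matrix (Fin n) (Fin n) ℂ}
    (hM : M.IsHermitian) : specRad M = ‖M‖ := by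
  rw [specRad_eq_toReal_spectralRadius, hM.isSelfAdjoint.toReal_spectralRadius_complex_eq_norm]

theorem Matrix.norm_mulVec_apply_le {𝕜 : Type*} [RCLike 𝕜] {m n : Type*} [Fintype n]
    {M : Matrix m n 𝕜} {N : Matrix m n ℝ} (h : ∀ i j, ‖M i j‖ ≤ N i j) (x : n → 𝕜) (i : m) :
    ‖(M *ᵥ x) i‖ ≤ (N *ᵥ fun j => ‖x j‖) i := by
  refine (norm_sum_le _ _).trans (Finset.sum_le_sum fun j _ => ?_)
  rw [norm_mul]
  exact mul_le_mul_of_nonneg_right (h i j) (norm_nonneg _)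

theorem Matrix.l2_opNorm_le_of_norm_apply_le {𝕜 : Type*} [RCLike 𝕜] {m n : Type*}
    [Fintype m] [Fintype n] [DecidableEq n] {M : Matrix m n 𝕜} {N : Matrix m n ℝ}
    (h : ∀ i j, ‖M i j‖ ≤ N i j) : ‖M‖ ≤ ‖N.map ((↑) : ℝ → 𝕜)‖ := by
  rw [l2_opNorm_def]
  refine ContinuousLinearMap.opNorm_le_bound _ (norm_nonneg _) fun x => ?_
  let y : EuclideanSpace 𝕜 n := WithLp.toLp 2 fun j => (‖x j‖ : 𝕜)
  have hy : ‖y‖ = ‖x‖ := by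
    rw [EuclideanSpace.norm_eq, EuclideanSpace.norm_eq]
    simp [y]
  calc _ ≤ ‖(EuclideanSpace.equiv m 𝕜).symm (N.map ((↑) : ℝ → 𝕜) *ᵥ y)‖ := by
        refine EuclideanSpace.norm_le_norm_of_norm_apply_le fun i => ?_
        have hle := norm_mulVec_apply_le h x.ofLp i
        have hNy : (N.map ((↑) : ℝ → 𝕜) *ᵥ y.ofLp) i = ((N *ᵥ fun j => ‖x j‖) i : 𝕜) := by
          simp [y, mulVec, dotProduct]
        change ‖(M *ᵥ x.ofLp) i‖ ≤ ‖(N.map ((↑) : ℝ → 𝕜) *ᵥ y.ofLp) i‖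
        rwa [hNy, RCLike.norm_ofReal, abs_of_nonneg ((norm_nonneg _).trans hle)]
    _ ≤ ‖N.map ((↑) : ℝ → 𝕜)‖ * ‖x‖ := hy ▸ l2_opNorm_mulVec _ y

theorem specRad_le_of_norm_apply_le {n : ℕ} [NeZero n] {M : Matrix (Fin n) (Fin n) ℂ}
    {N : Matrix (Fin n) (Fin n) ℝ} (hN : N.IsSymm) (h : ∀ i j, ‖M i j‖ ≤ N i j) :
    specRad M ≤ specRad (N.map Complex.ofReal) := by
  have hNc : (N.map Complex.ofReal).IsHermitian :=
    (isHermitian_iff_isSymm.mpr hN).map _ fun a => (Complex.conj_ofReal a).symm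
  calc specRad M ≤ ‖M‖ := specRad_le_l2_opNorm M
    _ ≤ ‖N.map Complex.ofReal‖ := l2_opNorm_le_of_norm_apply_le h
    _ = specRad (N.map Complex.ofReal) := hNc.specRad_eq_l2_opNorm.symm

theorem stmt_7_general {n : ℕ} (hn : 2 ≤ n) (D : Matrix (Fin n) (Fin n) ℝ)
    (hsymm : D.IsSymm)
    (A : Matrix (Fin n) (Fin n) ℂ)
    (habs : ∀ i j, ‖A i j‖ = D i j) :
    specRad (Matrix.diagonal (fun i => ((∑ j, D i j : ℝ) : ℂ)) - A) ≤
      specRad ((Matrix.diagonal (fun i => ∑ j, D i j) + D).map Complex.ofReal) := by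
  have : NeZero n := ⟨by omega⟩
  refine specRad_le_of_norm_apply_le ((isSymm_diagonal _).add hsymm) fun i j => ?_
  have hTr : ‖diagonal (fun i => ((∑ j, D i j : ℝ) : ℂ)) i j‖ =
      diagonal (fun i => ∑ j, D i j) i j := by
    by_cases hij : i = j
    · have hrow : 0 ≤ ∑ k, D i k := Finset.sum_nonneg fun k _ => habs i k ▸ norm_nonneg _
      rw [← hij, diagonal_apply_eq, diagonal_apply_eq, Complex.norm_real,
        Real.norm_of_nonneg hrow]
    · simp [hij]
  calc _ ≤ ‖diagonal (fun i => ((∑ j, D i j : ℝ) : ℂ)) i j‖ + ‖A i j‖ := norm_sub_le _ _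
    _ = _ := by rw [hTr, habs]; rfl

/-- `ρ(DL(Φ)) ≤ ρ(DQ(G))`: the gain distance Laplacian spectral radius is at most
the spectral radius of the distance signless Laplacian. -/
theorem stmt_7 {n : ℕ} (hn : 2 ≤ n) (D : Matrix (Fin n) (Fin n) ℝ)
    (hsymm : D.IsSymm) (hdiag : ∀ i, D i i = 0)
    (hpos : ∀ i j, i ≠ j → 0 < D i j)
    (A : Matrix (Fin n) (Fin n) ℂ) (hA : A.IsHermitian)
    (habs : ∀ i j, ‖A i j‖ = D i j) :
    specRad (Matrix.diagonal (fun i => ((∑ j, D i j : ℝ) : ℂ)) - A) ≤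
      specRad ((Matrix.diagonal (fun i => ∑ j, D i j) + D).map Complex.ofReal) :=
  stmt_7_general hn D hsymm A habs
end

section
/- Let L be an n×n Hermitian positive semidefinite matrix (n ≥ 2) with diagonal entries C(1),...,C(n) and suppose the off-diagonal entries satisfy |L_ij| = d_ij where d_ij ≥ 0 and C(i) = Σ_j d_ij for each i. Then ρ(L) ≥ C(k) + (Σ_j d_kj²)/C(k) for any index k with C(k) > 0. -/
/-!
For `0 ≤ L` with spectrum in `[0, ρ]`, the functional calculus gives `L² ≤ ρ L`, so the `(k, k)`
entry of `ρ L - L²` is nonnegative. Since `L` is Hermitian, `(L²)_kk = ∑ⱼ |L_kj|² = C(k)² + ∑ⱼ d_kj²`,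
while `L_kk = C(k)`; dividing by `C(k)` gives the bound.
-/

open Matrix
open scoped ComplexOrder

theorem mul_self_le_smul_of_spectrum_le {A : Type*} [TopologicalSpace A] [Ring A] [StarRing A]
    [PartialOrder A] [StarOrderedRing A] [Algebra ℝ A]
    [ContinuousFunctionalCalculus ℝ A IsSelfAdjoint] [NonnegSpectrumClass ℝ A]
    {a : A} (ha : 0 ≤ a) {r : ℝ} (hr : ∀ x ∈ spectrum ℝ a, x ≤ r) : a * a ≤ r • a := by
  have h : cfc (fun x : ℝ => x ^ 2) a ≤ cfc (fun x => r * x) a :=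
    cfc_mono fun x hx => by
      rw [sq]
      exact mul_le_mul_of_nonneg_right (hr x hx) (spectrum_nonneg_of_nonneg ha hx)
  rwa [cfc_pow_id a 2, cfc_const_mul_id r a, sq] at h

theorem le_specRad_of_mem_spectrum {n : ℕ} {M : Matrix (Fin n) (Fin n) ℂ} {x : ℝ}
    (hx : x ∈ spectrum ℝ M) : x ≤ specRad M := by
  have hmem : ‖(x : ℂ)‖ ∈ (fun μ => ‖μ‖) '' spectrum ℂ M :=
    ⟨x, spectrum.algebraMap_mem ℂ hx, rfl⟩
  calc x ≤ ‖(x : ℂ)‖ := by simpa using le_abs_self x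
    _ ≤ specRad M := le_csSup (M.finite_spectrum.image _).bddAbove hmem

theorem Matrix.IsHermitian.mul_self_apply_self {ι : Type*} [Fintype ι] {A : Matrix ι ι ℂ}
    (hA : A.IsHermitian) (k : ι) : (A * A) k k = ((∑ j, ‖A k j‖ ^ 2 : ℝ) : ℂ) := by
  rw [mul_apply, Complex.ofReal_sum]
  refine Finset.sum_congr rfl fun j _ => ?_
  rw [← hA.apply j k, Complex.ofReal_pow]
  exact Complex.mul_conj' (A k j)

open scoped MatrixOrder in
theorem Matrix.PosSemidef.sum_norm_sq_apply_le {n : ℕ} {A : Matrix (Fin n) (Fin n) ℂ}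
    (hA : A.PosSemidef) (k : Fin n) :
    ((∑ j, ‖A k j‖ ^ 2 : ℝ) : ℂ) ≤ specRad A * A k k := by
  have h : A * A ≤ specRad A • A :=
    mul_self_le_smul_of_spectrum_le hA.nonneg fun _ => le_specRad_of_mem_spectrum
  have hk : 0 ≤ (specRad A • A - A * A) k k := (Matrix.le_iff.mp h).diag_nonneg
  rw [sub_apply, smul_apply, hA.isHermitian.mul_self_apply_self, sub_nonneg] at hk
  simpa [Complex.real_smul] using hk

theorem stmt_12_general {n : ℕ}
    (L : Matrix (Fin n) (Fin n) ℂ) (hL : L.PosSemidef)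
    (d : Fin n → Fin n → ℝ) (hd0 : ∀ i, d i i = 0)
    (habs : ∀ i j, i ≠ j → ‖L i j‖ = d i j)
    (hdiag : ∀ i, L i i = ((∑ j, d i j : ℝ) : ℂ))
    (k : Fin n) (hk : 0 < ∑ j, d k j) :
    (∑ j, d k j) + (∑ j, (d k j) ^ 2) / (∑ j, d k j) ≤ specRad L := by
  set C := ∑ j, d k j
  have hentry (j : Fin n) : ‖L k j‖ ^ 2 = d k j ^ 2 + if j = k then C ^ 2 else 0 := by
    by_cases hj : j = k
    · subst hj
      rw [hdiag, hd0, Complex.norm_real, Real.norm_eq_abs, sq_abs, if_pos rfl]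
      ring
    · simp [habs k j (Ne.symm hj), hj]
  have hrow : ∑ j, ‖L k j‖ ^ 2 = ∑ j, d k j ^ 2 + C ^ 2 := by
    simp only [hentry, Finset.sum_add_distrib, Finset.sum_ite_eq', Finset.mem_univ, if_true]
  have h := hL.sum_norm_sq_apply_le k
  rw [hrow, hdiag k] at h
  have h' : ∑ j, d k j ^ 2 + C ^ 2 ≤ specRad L * C := by exact_mod_cast h
  rw [add_div' _ _ _ hk.ne', div_le_iff₀ hk]
  linarith

/-- Cholesky step of the Wiener-index lower bound: for a PSD Hermitian `L` with
`L_ii = Σ_j d_ij` and `|L_ij| = d_ij` off the diagonal,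
`ρ(L) ≥ C(k) + (Σ_j d_kj²)/C(k)` whenever `C(k) > 0`. -/
theorem stmt_12 {n : ℕ} (hn : 2 ≤ n)
    (L : Matrix (Fin n) (Fin n) ℂ) (hL : L.PosSemidef)
    (d : Fin n → Fin n → ℝ) (hd0 : ∀ i, d i i = 0)
    (habs : ∀ i j, i ≠ j → ‖L i j‖ = d i j)
    (hdiag : ∀ i, L i i = ((∑ j, d i j : ℝ) : ℂ))
    (k : Fin n) (hk : 0 < ∑ j, d k j) :
    (∑ j, d k j) + (∑ j, (d k j) ^ 2) / (∑ j, d k j) ≤ specRad L :=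
  stmt_12_general L hL d hd0 habs hdiag k hk
end

section
/- Let N be an n×n Hermitian matrix and M an n×n nonnegative real matrix with M ≥ |N| entrywise, M irreducible and symmetric. If N is positive semidefinite and ρ(N) = ρ(M), then N and M are unitarily similar via a diagonal unitary matrix, and in particular N and M have the same spectrum. -/
open Matrix
open scoped ComplexOrder

/-- Entrywise irreducibility of a real matrix. -/
def MatIrred {n : ℕ} (M : Matrix (Fin n) (Fin n) ℝ) : Prop :=
  ∀ S : Set (Fin n), S.Nonempty → Sᶜ.Nonempty → ∃ i ∈ S, ∃ j ∈ Sᶜ, M i j ≠ 0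

/-!
Since `N` is positive semidefinite, `ρ := ρ(N) = ρ(M)` is an eigenvalue of `N`; let `z` be a unit
eigenvector and `y = |z|` entrywise. Then
`ρ = z* N z ≤ ∑ |z_i| |N_ij| |z_j| ≤ yᵀ M y ≤ ρ(M) |y|² = ρ`,
so all these inequalities are equalities. Equality in the Rayleigh bound makes `y` an eigenvector
of `M` for `ρ`, which irreducibility forces to be positive. Termwise equality in the triangle
inequality says `conj z_i N_ij z_j = y_i M_ij y_j`, that is `N = D M D*` with
`D = diag (z_i / |z_i|)`.
-/

lemma Complex.re_star_mul_mul_le {a b n : ℂ} {m : ℝ} (h : ‖n‖ ≤ m) :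
    (star a * n * b).re ≤ ‖a‖ * m * ‖b‖ :=
  calc (star a * n * b).re ≤ ‖star a * n * b‖ := Complex.re_le_norm _
    _ = ‖a‖ * ‖n‖ * ‖b‖ := by rw [norm_mul, norm_mul, norm_star]
    _ ≤ ‖a‖ * m * ‖b‖ := by gcongr

lemma Complex.star_mul_mul_eq_of_le_re {a b n : ℂ} {m : ℝ} (h : ‖n‖ ≤ m)
    (he : ‖a‖ * m * ‖b‖ ≤ (star a * n * b).re) : star a * n * b = ‖a‖ * m * ‖b‖ := by
  have hre : (star a * n * b).re = ‖a‖ * m * ‖b‖ := le_antisymm (re_star_mul_mul_le h) he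
  have hnorm : (star a * n * b).re = ‖star a * n * b‖ := by
    refine le_antisymm (re_le_norm _) ?_
    rw [norm_mul, norm_mul, norm_star, hre]
    gcongr
  rw [eq_re_of_ofReal_le (r := 0) (z := star a * n * b) (by simpa using re_eq_norm.1 hnorm), hre]
  push_cast
  rfl

namespace Matrix

section

variable {ι : Type*}

lemma IsSymm.isHermitian_map_ofReal {M : Matrix ι ι ℝ} (hM : M.IsSymm) :
    (M.map Complex.ofReal).IsHermitian :=
  (isHermitian_iff_isSymm.2 hM).map _ fun x => (Complex.conj_ofReal x).symm

lemma star_ofReal_comp (v : ι → ℝ) : star (Complex.ofReal ∘ v) = Complex.ofReal ∘ v :=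
  funext fun i => Complex.conj_ofReal (v i)

variable [Fintype ι]

lemma ofReal_comp_dotProduct (v w : ι → ℝ) :
    Complex.ofReal ∘ v ⬝ᵥ Complex.ofReal ∘ w = ((v ⬝ᵥ w : ℝ) : ℂ) :=
  (RingHom.map_dotProduct Complex.ofRealHom v w).symm

lemma map_ofReal_mulVec_ofReal_comp (M : Matrix ι ι ℝ) (v : ι → ℝ) :
    M.map Complex.ofReal *ᵥ (Complex.ofReal ∘ v) = Complex.ofReal ∘ (M *ᵥ v) :=
  funext fun i => (RingHom.map_mulVec Complex.ofRealHom M v i).symm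

lemma dotProduct_mulVec_eq_sum {R : Type*} [CommSemiring R] (v w : ι → R) (A : Matrix ι ι R) :
    v ⬝ᵥ A *ᵥ w = ∑ i, ∑ j, v i * A i j * w j := by
  simp only [dotProduct, mulVec, Finset.mul_sum, mul_assoc]

lemma norm_dotProduct_norm_eq_re_star_dotProduct_self (z : ι → ℂ) :
    (‖z ·‖) ⬝ᵥ (‖z ·‖) = (star z ⬝ᵥ z).re := by
  simp [dotProduct, Complex.re_sum, Complex.conj_mul', sq]

lemma re_star_dotProduct_mulVec_le {N : Matrix ι ι ℂ} {M : Matrix ι ι ℝ}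
    (hNM : ∀ i j, ‖N i j‖ ≤ M i j) (z : ι → ℂ) :
    (star z ⬝ᵥ N *ᵥ z).re ≤ (‖z ·‖) ⬝ᵥ M *ᵥ (‖z ·‖) := by
  simp only [dotProduct_mulVec_eq_sum, Complex.re_sum, Pi.star_apply]
  exact Finset.sum_le_sum fun i _ => Finset.sum_le_sum fun j _ =>
    Complex.re_star_mul_mul_le (hNM i j)

lemma star_mul_mul_eq_of_le_re_star_dotProduct_mulVec {N : Matrix ι ι ℂ} {M : Matrix ι ι ℝ}
    (hNM : ∀ i j, ‖N i j‖ ≤ M i j) {z : ι → ℂ}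
    (h : (‖z ·‖) ⬝ᵥ M *ᵥ (‖z ·‖) ≤ (star z ⬝ᵥ N *ᵥ z).re) (i j : ι) :
    star (z i) * N i j * z j = ‖z i‖ * M i j * ‖z j‖ := by
  have hle (i j : ι) : (star (z i) * N i j * z j).re ≤ ‖z i‖ * M i j * ‖z j‖ :=
    Complex.re_star_mul_mul_le (hNM i j)
  have hsum := le_antisymm (re_star_dotProduct_mulVec_le hNM z) h
  simp only [dotProduct_mulVec_eq_sum, Complex.re_sum, Pi.star_apply] at hsum
  have hrow := (Finset.sum_eq_sum_iff_of_le fun i _ => Finset.sum_le_sum fun j _ => hle i j).1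
    hsum i (Finset.mem_univ i)
  exact Complex.star_mul_mul_eq_of_le_re (hNM i j)
    ((Finset.sum_eq_sum_iff_of_le fun j _ => hle i j).1 hrow j (Finset.mem_univ j)).ge

variable [DecidableEq ι]

lemma dotProduct_smul_one_sub_mulVec {R : Type*} [CommRing R] (A : Matrix ι ι R) (r : R)
    (v w : ι → R) : v ⬝ᵥ (r • 1 - A) *ᵥ w = r * (v ⬝ᵥ w) - v ⬝ᵥ A *ᵥ w := by
  rw [sub_mulVec, smul_mulVec, one_mulVec, dotProduct_sub, dotProduct_smul, smul_eq_mul]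

lemma IsHermitian.posSemidef_smul_one_sub {A : Matrix ι ι ℂ} (hA : A.IsHermitian) {r : ℝ}
    (hr : ∀ i, hA.eigenvalues i ≤ r) : ((r : ℂ) • 1 - A).PosSemidef := by
  refine posSemidef_iff_isHermitian_and_spectrum_nonneg.2
    ⟨(isHermitian_one.smul (Complex.conj_ofReal r)).sub hA, ?_⟩
  rw [← Algebra.algebraMap_eq_smul_one, ← spectrum.singleton_sub_eq, hA.spectrum_eq_image_range]
  rintro _ ⟨_, rfl, _, ⟨_, ⟨i, rfl⟩, rfl⟩, rfl⟩
  simpa using hr i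

lemma IsHermitian.re_dotProduct_mulVec_le {A : Matrix ι ι ℂ} (hA : A.IsHermitian) {r : ℝ}
    (hr : ∀ i, hA.eigenvalues i ≤ r) (x : ι → ℂ) :
    (star x ⬝ᵥ A *ᵥ x).re ≤ r * (star x ⬝ᵥ x).re := by
  have h := (Complex.le_def.1 ((hA.posSemidef_smul_one_sub hr).dotProduct_mulVec_nonneg x)).1
  rw [dotProduct_smul_one_sub_mulVec] at h
  simpa using h

lemma IsHermitian.mulVec_eq_smul_of_le_re_dotProduct_mulVec {A : Matrix ι ι ℂ}
    (hA : A.IsHermitian) {r : ℝ} (hr : ∀ i, hA.eigenvalues i ≤ r) {x : ι → ℂ}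
    (h : r * (star x ⬝ᵥ x).re ≤ (star x ⬝ᵥ A *ᵥ x).re) : A *ᵥ x = (r : ℂ) • x := by
  have hB := hA.posSemidef_smul_one_sub hr
  have hq := hB.dotProduct_mulVec_nonneg x
  have hq0 : star x ⬝ᵥ ((r : ℂ) • 1 - A) *ᵥ x = 0 := by
    refine le_antisymm (Complex.le_def.2 ⟨?_, (Complex.le_def.1 hq).2.symm⟩) hq
    rw [dotProduct_smul_one_sub_mulVec]
    simpa using h
  rw [hB.dotProduct_mulVec_zero_iff, sub_mulVec, smul_mulVec, one_mulVec, sub_eq_zero] at hq0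
  exact hq0.symm

lemma exists_eq_diagonal_mul_mul_conjTranspose {N : Matrix ι ι ℂ} {M : Matrix ι ι ℝ}
    {z : ι → ℂ} (hz : ∀ i, z i ≠ 0)
    (h : ∀ i j, star (z i) * N i j * z j = ‖z i‖ * M i j * ‖z j‖) :
    ∃ u : ι → ℂ, (∀ i, ‖u i‖ = 1) ∧
      N = diagonal u * M.map Complex.ofReal * (diagonal u)ᴴ := by
  refine ⟨fun i => z i / ‖z i‖, fun i => by simp [norm_ne_zero_iff.2 (hz i)], ?_⟩
  ext i j
  simp only [diagonal_conjTranspose, mul_diagonal, diagonal_mul, map_apply, Pi.star_apply]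
  have hzi : (‖z i‖ : ℂ) ≠ 0 := by exact_mod_cast norm_ne_zero_iff.2 (hz i)
  have hzj : (‖z j‖ : ℂ) ≠ 0 := by exact_mod_cast norm_ne_zero_iff.2 (hz j)
  have hi := Complex.mul_conj' (z i)
  have hj := Complex.mul_conj' (z j)
  have hij := h i j
  simp only [star_div₀, Complex.star_def, Complex.conj_ofReal] at hij ⊢
  field_simp
  refine mul_left_cancel₀ (mul_ne_zero hzi hzj) ?_
  linear_combination (z i * (starRingEnd ℂ) (z j)) * hij - N i j * ‖z j‖ ^ 2 * hi
    - N i j * z i * (starRingEnd ℂ) (z i) * hj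

lemma spectrum_diagonal_mul_mul_conjTranspose {u : ι → ℂ} (hu : ∀ i, ‖u i‖ = 1)
    (A : Matrix ι ι ℂ) : spectrum ℂ (diagonal u * A * (diagonal u)ᴴ) = spectrum ℂ A := by
  have hU : diagonal u ∈ unitaryGroup ι ℂ := by
    rw [mem_unitaryGroup_iff, star_eq_conjTranspose, diagonal_conjTranspose, diagonal_mul_diagonal,
      ← diagonal_one]
    congr 1
    funext i
    simp [Complex.mul_conj', hu i]
  exact Unitary.spectrum_star_right_conjugate (U := ⟨_, hU⟩)

end

section SpectralRadius

variable {n : ℕ}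

lemma IsHermitian.specRad_eq_iSup {A : Matrix (Fin n) (Fin n) ℂ} (hA : A.IsHermitian) :
    specRad A = ⨆ i, |hA.eigenvalues i| := by
  rw [specRad, hA.spectrum_eq_image_range, Set.image_image, ← Set.range_comp]
  simp [Function.comp_def, iSup]

lemma IsHermitian.eigenvalues_le_specRad {A : Matrix (Fin n) (Fin n) ℂ} (hA : A.IsHermitian)
    (i : Fin n) : hA.eigenvalues i ≤ specRad A :=
  (le_abs_self _).trans <| hA.specRad_eq_iSup ▸
    le_ciSup (f := fun i => |hA.eigenvalues i|) (Set.finite_range _).bddAbove i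

lemma PosSemidef.exists_eigenvector_specRad [Nonempty (Fin n)] {A : Matrix (Fin n) (Fin n) ℂ}
    (hA : A.PosSemidef) : ∃ z : Fin n → ℂ, star z ⬝ᵥ z = 1 ∧ A *ᵥ z = (specRad A : ℂ) • z := by
  obtain ⟨i, hi⟩ := exists_eq_ciSup_of_finite (f := fun i => |hA.isHermitian.eigenvalues i|)
  have hev : hA.isHermitian.eigenvalues i = specRad A := by
    rw [hA.isHermitian.specRad_eq_iSup, ← hi, abs_of_nonneg (hA.eigenvalues_nonneg i)]
  refine ⟨hA.isHermitian.eigenvectorBasis i, ?_, ?_⟩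
  · rw [dotProduct_comm, ← EuclideanSpace.inner_eq_star_dotProduct, OrthonormalBasis.inner_eq_one]
  · rw [hA.isHermitian.mulVec_eigenvectorBasis, hev, Complex.coe_smul]

lemma IsSymm.dotProduct_mulVec_le_specRad {M : Matrix (Fin n) (Fin n) ℝ} (hM : M.IsSymm)
    (y : Fin n → ℝ) : y ⬝ᵥ M *ᵥ y ≤ specRad (M.map Complex.ofReal) * (y ⬝ᵥ y) := by
  have hA := hM.isHermitian_map_ofReal
  simpa only [star_ofReal_comp, map_ofReal_mulVec_ofReal_comp, ofReal_comp_dotProduct,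
    Complex.ofReal_re] using
    hA.re_dotProduct_mulVec_le hA.eigenvalues_le_specRad (Complex.ofReal ∘ y)

lemma IsSymm.mulVec_eq_specRad_smul_of_le {M : Matrix (Fin n) (Fin n) ℝ} (hM : M.IsSymm)
    {y : Fin n → ℝ} (h : specRad (M.map Complex.ofReal) * (y ⬝ᵥ y) ≤ y ⬝ᵥ M *ᵥ y) :
    M *ᵥ y = specRad (M.map Complex.ofReal) • y := by
  have hA := hM.isHermitian_map_ofReal
  have h' : specRad (M.map Complex.ofReal) * (star (Complex.ofReal ∘ y) ⬝ᵥ Complex.ofReal ∘ y).re ≤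
      (star (Complex.ofReal ∘ y) ⬝ᵥ M.map Complex.ofReal *ᵥ (Complex.ofReal ∘ y)).re := by
    simpa only [star_ofReal_comp, map_ofReal_mulVec_ofReal_comp, ofReal_comp_dotProduct,
      Complex.ofReal_re] using h
  have hy := hA.mulVec_eq_smul_of_le_re_dotProduct_mulVec hA.eigenvalues_le_specRad h'
  rw [map_ofReal_mulVec_ofReal_comp] at hy
  funext i
  have hyi := congrFun hy i
  simp only [Function.comp_apply, Pi.smul_apply, smul_eq_mul] at hyi ⊢
  exact_mod_cast hyi

end SpectralRadius

end Matrix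

lemma MatIrred.pos_of_mulVec_eq_smul {n : ℕ} {M : Matrix (Fin n) (Fin n) ℝ} (hM : MatIrred M)
    (hMnn : ∀ i j, 0 ≤ M i j) {y : Fin n → ℝ} (hy : ∀ i, 0 ≤ y i) (hy0 : y ≠ 0) {r : ℝ}
    (hMy : M *ᵥ y = r • y) (i : Fin n) : 0 < y i := by
  by_contra! hi
  obtain ⟨j, hj⟩ := Function.ne_iff.1 hy0
  obtain ⟨k, hk : y k = 0, l, hl : y l ≠ 0, hkl⟩ :=
    hM {i | y i = 0} ⟨i, le_antisymm hi (hy i)⟩ ⟨j, hj⟩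
  have hrow : ∑ m, M k m * y m = 0 := by
    simpa [mulVec, dotProduct, hk] using congrFun hMy k
  exact mul_ne_zero hkl hl <| (Finset.sum_eq_zero_iff_of_nonneg fun m _ =>
    mul_nonneg (hMnn k m) (hy m)).1 hrow l (Finset.mem_univ l)

theorem stmt_19_general {n : ℕ} (hn : 2 ≤ n)
    (N : Matrix (Fin n) (Fin n) ℂ)
    (M : Matrix (Fin n) (Fin n) ℝ) (hMnn : ∀ i j, 0 ≤ M i j)
    (hdom : ∀ i j, ‖N i j‖ ≤ M i j)
    (hirr : MatIrred M) (hMsymm : M.IsSymm)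
    (hpsd : N.PosSemidef)
    (hrad : specRad N = specRad (M.map Complex.ofReal)) :
    ∃ u : Fin n → ℂ, (∀ i, ‖u i‖ = 1) ∧
      N = Matrix.diagonal u * M.map Complex.ofReal * (Matrix.diagonal u)ᴴ ∧
      spectrum ℂ N = spectrum ℂ (M.map Complex.ofReal) := by
  have : Nonempty (Fin n) := ⟨⟨0, by omega⟩⟩
  obtain ⟨z, hz1, hNz⟩ := hpsd.exists_eigenvector_specRad
  set ρ := specRad (M.map Complex.ofReal)
  set y : Fin n → ℝ := (‖z ·‖)
  have hy1 : y ⬝ᵥ y = 1 := by simp [y, norm_dotProduct_norm_eq_re_star_dotProduct_self, hz1]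
  have hρ : (star z ⬝ᵥ N *ᵥ z).re = ρ := by simp [hNz, dotProduct_smul, hz1, hrad, ρ]
  have hle : y ⬝ᵥ M *ᵥ y ≤ ρ := by simpa [hy1] using hMsymm.dotProduct_mulVec_le_specRad y
  have hge : ρ ≤ y ⬝ᵥ M *ᵥ y := hρ ▸ re_star_dotProduct_mulVec_le hdom z
  have hMy : M *ᵥ y = ρ • y := hMsymm.mulVec_eq_specRad_smul_of_le (by rwa [hy1, mul_one])
  have hz (i : Fin n) : z i ≠ 0 := norm_pos_iff.1 <|
    hirr.pos_of_mulVec_eq_smul hMnn (fun i => norm_nonneg _) (fun h => by simp [h, y] at hy1) hMy i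
  obtain ⟨u, hu, hNu⟩ := exists_eq_diagonal_mul_mul_conjTranspose hz <|
    star_mul_mul_eq_of_le_re_star_dotProduct_mulVec hdom (hle.trans hρ.ge)
  exact ⟨u, hu, hNu, hNu ▸ spectrum_diagonal_mul_mul_conjTranspose hu _⟩

/-- Perron–Frobenius equality case for PSD matrices: if `N` is Hermitian PSD,
`M ≥ |N|` entrywise with `M` symmetric irreducible nonnegative, `M ≠ 0` and
`ρ(N) = ρ(M)`, then `N = U M U*` for some diagonal unitary `U`; in particular
`N` and `M` are cospectral. -/
theorem stmt_19 {n : ℕ} (hn : 2 ≤ n)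
    (N : Matrix (Fin n) (Fin n) ℂ) (hN : N.IsHermitian)
    (M : Matrix (Fin n) (Fin n) ℝ) (hMnn : ∀ i j, 0 ≤ M i j)
    (hdom : ∀ i j, ‖N i j‖ ≤ M i j)
    (hirr : MatIrred M) (hMsymm : M.IsSymm) (hM0 : M ≠ 0)
    (hpsd : N.PosSemidef)
    (hrad : specRad N = specRad (M.map Complex.ofReal)) :
    ∃ u : Fin n → ℂ, (∀ i, ‖u i‖ = 1) ∧
      N = Matrix.diagonal u * M.map Complex.ofReal * (Matrix.diagonal u)ᴴ ∧
      spectrum ℂ N = spectrum ℂ (M.map Complex.ofReal) :=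
  stmt_19_general hn N M hMnn hdom hirr hMsymm hpsd hrad
end
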